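/- For irreducible T-modules U and W, the following are equivalent: (i) U and W are quasi-isomorphic and have the same endpoint; (ii) U and W are isomorphic as T-modules. -/

import Mathlib

/-!
Every edge joins vertices whose distances from `x` differ by at most one, so `A = L + F + R`.
Hence a quasi-isomorphism with shift `0` commutes with `A` and with every `E*_i`, i.e. with all
of `T`. Conversely a `T`-isomorphism commutes with `L, F, R ∈ T` and with the `E*_i`, so it
maps `E*_i U` injectively onto `E*_i W`; the two modules then have the same nonvanishing
`E*_i`-components, hence the same endpoint, and the shift is `0`.
-/

open Matrix BigOperators

noncomputable section

variable {X : Type*} [Fintype X] [DecidableEq X]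

/-- The adjacency matrix of a graph, over ℂ. -/
def adjMat (G : SimpleGraph X) [DecidableRel G.Adj] : Matrix X X ℂ :=
  Matrix.of fun y z => if G.Adj y z then 1 else 0

/-- The dual idempotent `E*_i`: diagonal 0-1 matrix projecting onto
vertices at distance `i` from `x` (zero for `i` outside the distance range). -/
def Estar (G : SimpleGraph X) (x : X) (i : ℤ) : Matrix X X ℂ :=
  Matrix.diagonal fun y => if (G.dist x y : ℤ) = i then 1 else 0

/-- The lowering matrix `L = Σ_{i=1}^D E*_{i-1} A E*_i`. -/
def lowerM (G : SimpleGraph X) [DecidableRel G.Adj] (x : X) (D : ℕ) : Matrix X X ℂ :=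
  ∑ i ∈ Finset.Icc 1 D, Estar G x ((i : ℤ) - 1) * adjMat G * Estar G x i

/-- The flat matrix `F = Σ_{i=0}^D E*_i A E*_i`. -/
def flatM (G : SimpleGraph X) [DecidableRel G.Adj] (x : X) (D : ℕ) : Matrix X X ℂ :=
  ∑ i ∈ Finset.range (D + 1), Estar G x i * adjMat G * Estar G x i

/-- The raising matrix `R = Σ_{i=0}^{D-1} E*_{i+1} A E*_i`. -/
def raiseM (G : SimpleGraph X) [DecidableRel G.Adj] (x : X) (D : ℕ) : Matrix X X ℂ :=
  ∑ i ∈ Finset.range D, Estar G x ((i : ℤ) + 1) * adjMat G * Estar G x i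

/-- The subconstituent (Terwilliger) algebra `T`, generated by `A` and the `E*_i`. -/
def Talg (G : SimpleGraph X) [DecidableRel G.Adj] (x : X) (D : ℕ) :
    Subalgebra ℂ (Matrix X X ℂ) :=
  Algebra.adjoin ℂ (insert (adjMat G) (Estar G x '' Set.Icc (0 : ℤ) (D : ℤ)))

/-- The quantum adjacency algebra `Q`, generated by `L, F, R`. -/
def Qalg (G : SimpleGraph X) [DecidableRel G.Adj] (x : X) (D : ℕ) :
    Subalgebra ℂ (Matrix X X ℂ) :=
  Algebra.adjoin ℂ {lowerM G x D, flatM G x D, raiseM G x D}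

/-- The dual adjacency algebra `M*`, the span of the `E*_i`. -/
def Mstar (G : SimpleGraph X) (x : X) (D : ℕ) : Submodule ℂ (Matrix X X ℂ) :=
  Submodule.span ℂ (Estar G x '' Set.Icc (0 : ℤ) (D : ℤ))

/-- The graded component `T_n = Σ_i E*_{i+n} T E*_i`. -/
def Tgraded (G : SimpleGraph X) [DecidableRel G.Adj] (x : X) (D : ℕ) (n : ℤ) :
    Submodule ℂ (Matrix X X ℂ) :=
  Submodule.span ℂ
    {M | ∃ i : ℤ, ∃ S ∈ Talg G x D, M = Estar G x (i + n) * S * Estar G x i}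

/-- The graded component `Q_n = Q ∩ T_n`. -/
def Qgraded (G : SimpleGraph X) [DecidableRel G.Adj] (x : X) (D : ℕ) (n : ℤ) :
    Submodule ℂ (Matrix X X ℂ) :=
  (Subalgebra.toSubmodule (Qalg G x D)) ⊓ Tgraded G x D n

/-- `W` is an irreducible module for the algebra `A₀ ⊆ Mat_X(ℂ)` (acting on `V = ℂ^X`
by matrix-vector multiplication). -/
def IsIrredMod (A₀ : Subalgebra ℂ (Matrix X X ℂ)) (W : Submodule ℂ (X → ℂ)) : Prop :=
  (∀ S ∈ A₀, ∀ w ∈ W, S.mulVec w ∈ W) ∧ W ≠ ⊥ ∧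
    ∀ W' : Submodule ℂ (X → ℂ), W' ≤ W →
      (∀ S ∈ A₀, ∀ w ∈ W', S.mulVec w ∈ W') → W' = ⊥ ∨ W' = W

/-- The subspace `E*_i W`. -/
def Emap (G : SimpleGraph X) (x : X) (i : ℤ) (W : Submodule ℂ (X → ℂ)) :
    Submodule ℂ (X → ℂ) :=
  W.map (Estar G x i).mulVecLin

/-- The subspace `P · W` spanned by all `S w`, `S ∈ P`, `w ∈ W`. -/
def actSp (P : Submodule ℂ (Matrix X X ℂ)) (W : Submodule ℂ (X → ℂ)) :
    Submodule ℂ (X → ℂ) :=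
  Submodule.span ℂ {v | ∃ S ∈ P, ∃ w ∈ W, v = S.mulVec w}

/-- The statement: `W` has endpoint `r` and diameter `d`, i.e. `E*_i W ≠ 0`
iff `r ≤ i ≤ r + d`. -/
def HasEndpointDiam (G : SimpleGraph X) (x : X) (W : Submodule ℂ (X → ℂ))
    (r d : ℕ) : Prop :=
  ∀ i : ℤ, Emap G x i W ≠ ⊥ ↔ ((r : ℤ) ≤ i ∧ i ≤ (r : ℤ) + (d : ℤ))

/-- `σ` restricts to an isomorphism of `Q`-modules from `U` to `W`. -/
def IsQIso (G : SimpleGraph X) [DecidableRel G.Adj] (x : X) (D : ℕ)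
    (U W : Submodule ℂ (X → ℂ)) (σ : (X → ℂ) →ₗ[ℂ] (X → ℂ)) : Prop :=
  U.map σ = W ∧ (∀ u ∈ U, σ u = 0 → u = 0) ∧
    ∀ S ∈ Qalg G x D, ∀ u ∈ U, σ (S.mulVec u) = S.mulVec (σ u)

/-- `σ` restricts to an isomorphism of `T`-modules from `U` to `W`. -/
def IsTIso (G : SimpleGraph X) [DecidableRel G.Adj] (x : X) (D : ℕ)
    (U W : Submodule ℂ (X → ℂ)) (σ : (X → ℂ) →ₗ[ℂ] (X → ℂ)) : Prop :=
  U.map σ = W ∧ (∀ u ∈ U, σ u = 0 → u = 0) ∧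
    ∀ S ∈ Talg G x D, ∀ u ∈ U, σ (S.mulVec u) = S.mulVec (σ u)

/-- `σ` restricts to a quasi-isomorphism of `T`-modules from `U` to `W`,
with endpoint shift `n`. -/
def IsQuasiIso (G : SimpleGraph X) [DecidableRel G.Adj] (x : X) (D : ℕ)
    (U W : Submodule ℂ (X → ℂ)) (σ : (X → ℂ) →ₗ[ℂ] (X → ℂ)) (n : ℤ) : Prop :=
  U.map σ = W ∧ (∀ u ∈ U, σ u = 0 → u = 0) ∧
    (∀ u ∈ U, σ ((lowerM G x D).mulVec u) = (lowerM G x D).mulVec (σ u)) ∧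
    (∀ u ∈ U, σ ((flatM G x D).mulVec u) = (flatM G x D).mulVec (σ u)) ∧
    (∀ u ∈ U, σ ((raiseM G x D).mulVec u) = (raiseM G x D).mulVec (σ u)) ∧
    ∀ i : ℤ, ∀ u ∈ U, σ ((Estar G x i).mulVec u) = (Estar G x (i + n)).mulVec (σ u)

end

section Generic

variable {X R : Type*} [Fintype X] [CommRing R]

theorem mulVec_comm_of_mem_adjoin [DecidableEq X] {s : Set (Matrix X X R)}
    {U : Submodule R (X → R)} (hU : ∀ S ∈ Algebra.adjoin R s, ∀ u ∈ U, S *ᵥ u ∈ U)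
    (σ : (X → R) →ₗ[R] (X → R))
    (hs : ∀ S ∈ s, ∀ u ∈ U, σ (S *ᵥ u) = S *ᵥ σ u) :
    ∀ S ∈ Algebra.adjoin R s, ∀ u ∈ U, σ (S *ᵥ u) = S *ᵥ σ u := by
  intro S hS
  induction hS using Algebra.adjoin_induction with
  | mem S hS => exact hs S hS
  | algebraMap c =>
    intro u _
    simp only [Algebra.algebraMap_eq_smul_one, smul_mulVec, one_mulVec, map_smul]
  | add S T _ _ ihS ihT =>
    intro u hu
    rw [add_mulVec, map_add, ihS u hu, ihT u hu, add_mulVec]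
  | mul S T _ hT ihS ihT =>
    intro u hu
    rw [← mulVec_mulVec, ihS _ (hU T hT u hu), ihT u hu, mulVec_mulVec]

theorem map_mulVecLin_eq_bot_iff {U W : Submodule R (X → R)} {σ : (X → R) →ₗ[R] (X → R)}
    (hmap : U.map σ = W) (hinj : ∀ u ∈ U, σ u = 0 → u = 0) {P : Matrix X X R}
    (hP : ∀ u ∈ U, P *ᵥ u ∈ U) (hσP : ∀ u ∈ U, σ (P *ᵥ u) = P *ᵥ σ u) :
    W.map P.mulVecLin = ⊥ ↔ U.map P.mulVecLin = ⊥ := by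
  rw [← hmap, ← le_bot_iff, ← le_bot_iff, Submodule.map_le_iff_le_comap,
    Submodule.map_le_iff_le_comap, Submodule.map_le_iff_le_comap]
  simp only [SetLike.le_def, Submodule.mem_comap, Submodule.mem_bot, mulVecLin_apply]
  refine forall₂_congr fun u hu => ⟨fun h => hinj _ (hP u hu) ?_, fun h => ?_⟩
  · rw [hσP u hu, h]
  · rw [← hσP u hu, h, map_zero]

end Generic

section Terwilliger

variable {X : Type*} [Fintype X] [DecidableEq X] {G : SimpleGraph X} {x : X}

theorem HasEndpointDiam.endpoint_eq {U W : Submodule ℂ (X → ℂ)} {r dU r' dW : ℕ}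
    (hU : HasEndpointDiam G x U r dU) (hW : HasEndpointDiam G x W r' dW)
    (h : ∀ i, Emap G x i U = ⊥ ↔ Emap G x i W = ⊥) : r = r' := by
  have key (i : ℤ) : (r ≤ i ∧ i ≤ r + dU) ↔ (r' ≤ i ∧ i ≤ r' + dW) :=
    (hU i).symm.trans ((not_congr (h i)).trans (hW i))
  have := (key r).mp ⟨le_rfl, by omega⟩
  have := (key r').mpr ⟨le_rfl, by omega⟩
  omega

variable [DecidableRel G.Adj] {D : ℕ}

theorem Estar_mem_Talg {i : ℤ} (hi : i ∈ Set.Icc (0 : ℤ) D) : Estar G x i ∈ Talg G x D :=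
  Algebra.subset_adjoin (Set.mem_insert_of_mem _ ⟨i, hi, rfl⟩)

theorem Estar_mem_Talg_or_eq_zero (hD : ∀ y, G.dist x y ≤ D) (i : ℤ) :
    Estar G x i ∈ Talg G x D ∨ Estar G x i = 0 := by
  by_cases hi : i ∈ Set.Icc (0 : ℤ) D
  · exact .inl (Estar_mem_Talg hi)
  · refine .inr (diagonal_eq_zero.mpr (funext fun y => if_neg ?_))
    rintro rfl
    exact hi ⟨Int.natCast_nonneg _, Int.ofNat_le.mpr (hD y)⟩

theorem Estar_mul_adjMat_mul_Estar_mem_Talg {i j : ℤ} (hi : i ∈ Set.Icc (0 : ℤ) D)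
    (hj : j ∈ Set.Icc (0 : ℤ) D) : Estar G x i * adjMat G * Estar G x j ∈ Talg G x D :=
  mul_mem (mul_mem (Estar_mem_Talg hi) (Algebra.subset_adjoin (Set.mem_insert _ _)))
    (Estar_mem_Talg hj)

theorem lowerM_mem_Talg : lowerM G x D ∈ Talg G x D :=
  Subalgebra.sum_mem _ fun i hi => by
    rw [Finset.mem_Icc] at hi
    exact Estar_mul_adjMat_mul_Estar_mem_Talg ⟨by omega, by omega⟩ ⟨by omega, by omega⟩

theorem flatM_mem_Talg : flatM G x D ∈ Talg G x D :=
  Subalgebra.sum_mem _ fun i hi => by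
    rw [Finset.mem_range] at hi
    exact Estar_mul_adjMat_mul_Estar_mem_Talg ⟨by omega, by omega⟩ ⟨by omega, by omega⟩

theorem raiseM_mem_Talg : raiseM G x D ∈ Talg G x D :=
  Subalgebra.sum_mem _ fun i hi => by
    rw [Finset.mem_range] at hi
    exact Estar_mul_adjMat_mul_Estar_mem_Talg ⟨by omega, by omega⟩ ⟨by omega, by omega⟩

theorem sum_Estar_mul_adjMat_mul_Estar_apply (s : Finset ℕ) (f : ℕ → ℤ) (y z : X) :
    (∑ i ∈ s, Estar G x (f i) * adjMat G * Estar G x i) y z =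
      if G.dist x z ∈ s ∧ (G.dist x y : ℤ) = f (G.dist x z) then adjMat G y z else 0 := by
  simp only [Matrix.sum_apply, Estar, mul_diagonal, diagonal_mul, Nat.cast_inj, ite_mul, one_mul,
    zero_mul, mul_ite, mul_one, mul_zero]
  rw [Finset.sum_ite_eq, ite_and]

theorem adjMat_eq_lowerM_add_flatM_add_raiseM (hD : ∀ y, G.dist x y ≤ D) :
    adjMat G = lowerM G x D + flatM G x D + raiseM G x D := by
  ext y z
  rw [Matrix.add_apply, Matrix.add_apply, lowerM, flatM, raiseM,
    sum_Estar_mul_adjMat_mul_Estar_apply _ (fun i => (i : ℤ) - 1),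
    sum_Estar_mul_adjMat_mul_Estar_apply _ (fun i => (i : ℤ)),
    sum_Estar_mul_adjMat_mul_Estar_apply _ (fun i => (i : ℤ) + 1)]
  simp only [Finset.mem_Icc, Finset.mem_range]
  by_cases hadj : G.Adj y z
  · have hyz := hadj.diff_dist_adj (u := x)
    have := hD y
    have := hD z
    split_ifs <;> first | omega | simp
  · simp [adjMat, hadj]

end Terwilliger

theorem stmt18_general {X : Type*} [Fintype X] [DecidableEq X]
    (G : SimpleGraph X) [DecidableRel G.Adj] (x : X) (D : ℕ)
    (hD : ∀ y, G.dist x y ≤ D)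
    (U W : Submodule ℂ (X → ℂ))
    (hU : IsIrredMod (Talg G x D) U)
    (r dU r' dW : ℕ)
    (hrU : HasEndpointDiam G x U r dU) (hrW : HasEndpointDiam G x W r' dW) :
    ((∃ σ : (X → ℂ) →ₗ[ℂ] (X → ℂ), IsQuasiIso G x D U W σ ((r' : ℤ) - (r : ℤ)))
        ∧ r = r')
      ↔ ∃ σ : (X → ℂ) →ₗ[ℂ] (X → ℂ), IsTIso G x D U W σ := by
  constructor
  · rintro ⟨⟨σ, hmap, hinj, hL, hF, hR, hE⟩, rfl⟩
    refine ⟨σ, hmap, hinj, mulVec_comm_of_mem_adjoin hU.1 σ ?_⟩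
    rintro S (rfl | ⟨i, -, rfl⟩) u hu
    · rw [adjMat_eq_lowerM_add_flatM_add_raiseM hD]
      simp only [add_mulVec, map_add, hL u hu, hF u hu, hR u hu]
    · simpa using hE i u hu
  · rintro ⟨σ, hmap, hinj, hT⟩
    have hEstar (i : ℤ) : ∀ u ∈ U, σ (Estar G x i *ᵥ u) = Estar G x i *ᵥ σ u := by
      rcases Estar_mem_Talg_or_eq_zero hD i with hi | hi
      · exact hT _ hi
      · simp [hi]
    have hEstarU (i : ℤ) : ∀ u ∈ U, Estar G x i *ᵥ u ∈ U := by
      rcases Estar_mem_Talg_or_eq_zero hD i with hi | hi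
      · exact hU.1 _ hi
      · simp [hi]
    obtain rfl : r = r' := hrU.endpoint_eq hrW fun i =>
      (map_mulVecLin_eq_bot_iff hmap hinj (hEstarU i) (hEstar i)).symm
    refine ⟨⟨σ, hmap, hinj, hT _ lowerM_mem_Talg, hT _ flatM_mem_Talg, hT _ raiseM_mem_Talg,
      fun i => by simpa using hEstar i⟩, rfl⟩

theorem stmt18 {X : Type*} [Fintype X] [DecidableEq X]
    (G : SimpleGraph X) [DecidableRel G.Adj] (hG : G.Connected) (x : X) (D : ℕ)
    (hD : ∀ y, G.dist x y ≤ D) (hD2 : ∃ y, G.dist x y = D)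
    (U W : Submodule ℂ (X → ℂ))
    (hU : IsIrredMod (Talg G x D) U) (hW : IsIrredMod (Talg G x D) W)
    (r dU r' dW : ℕ)
    (hrU : HasEndpointDiam G x U r dU) (hrW : HasEndpointDiam G x W r' dW) :
    ((∃ σ : (X → ℂ) →ₗ[ℂ] (X → ℂ), IsQuasiIso G x D U W σ ((r' : ℤ) - (r : ℤ)))
        ∧ r = r')
      ↔ ∃ σ : (X → ℂ) →ₗ[ℂ] (X → ℂ), IsTIso G x D U W σ :=
  stmt18_general G x D hD U W hU r dU r' dW hrU hrW
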